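/- Let U ⊆ ℝ³ be open with coordinates (x¹,x²,y³), write a* = ∂a/∂y³ and ∂_k = ∂/∂x^k (k ∈ {1,2}). Let f : U → ℝ be C² with f ≠ 0 and ∂₃f ≠ 0 everywhere, and let h₀ ≠ 0 be a real constant. Define h₄ := −f² and h₃ := h₀² (∂₃f)². Then on U: (i) (∂₃h₄)² = (4/h₀²)·h₃·|h₄|, so the quantity (∂₃h₄)²/|h₃ h₄| is the constant 4/h₀² (the generating function φ with e^{2φ}|h₃h₄| = (h₄*)² is constant, φ* = 0); (ii) h₄** − (h₄*)²/(2h₄) − h₃*h₄*/(2h₃) = 0; (iii) for k = 1,2, (h₄*/(4h₄)) ( ∂_k h₃/h₃ + ∂_k h₄/h₄ ) − ∂_k(h₄*)/(2h₄) = 0, so that the mixed decoupled Einstein equation (w_k/(2h₄))[h₄** − (h₄*)²/(2h₄) − h₃*h₄*/(2h₃)] + (h₄*/(4h₄))(∂_kh₃/h₃ + ∂_kh₄/h₄) − ∂_k(h₄*)/(2h₄) = 0 holds for arbitrary functions w_k on U. -/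

import Mathlib

/-!
Since `h₄* = -2 f f*`, the ratio `(h₄*)² / |h₃ h₄| = 4 f² (f*)² / (h₀² (f*)² f²)` is the
constant `4/h₀²`. The vertical and mixed equations are, up to the factor `h₄*` resp.
`-h₄*/(2h₄)`, the vanishing of `∂_a log |h₄*| - ½ ∂_a log |h₃| - ½ ∂_a log |h₄|` for `a = 3`
resp. `a = k`, i.e. of the logarithmic derivatives of that constant ratio; the coefficient
of `w_k` is the vertical equation, so `w_k` is unconstrained.
-/

noncomputable section

/-- Partial derivative `∂_i` on `ℝ³` (coordinates `(x¹,x²,y³)` indexed by `0,1,2`);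
`pd 2 a = a*`. -/
def pd (i : Fin 3) (f : (Fin 3 → ℝ) → ℝ) : (Fin 3 → ℝ) → ℝ :=
  fun x => fderiv ℝ f x (Pi.single i 1)

/-- Embedding of horizontal indices `{1,2}` into `Fin 3` (as `0,1`). -/
def ix (k : Fin 2) : Fin 3 := ⟨k.1, by omega⟩

open Filter Topology

section PartialDerivative

variable {g h : (Fin 3 → ℝ) → ℝ} {x : Fin 3 → ℝ}

theorem pd_mul (hg : DifferentiableAt ℝ g x) (hh : DifferentiableAt ℝ h x) (i : Fin 3) :
    pd i (fun y => g y * h y) x = g x * pd i h x + h x * pd i g x := by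
  simp only [pd, ← Pi.mul_def, fderiv_mul hg hh, add_apply, smul_apply, smul_eq_mul]

theorem pd_const_mul (c : ℝ) (hg : DifferentiableAt ℝ g x) (i : Fin 3) :
    pd i (fun y => c * g y) x = c * pd i g x := by
  simp only [pd, fderiv_const_mul hg c, smul_apply, smul_eq_mul]

theorem pd_const_mul_sq (c : ℝ) (hg : DifferentiableAt ℝ g x) (i : Fin 3) :
    pd i (fun y => c * g y ^ 2) x = 2 * c * g x * pd i g x := by
  simp only [sq]
  rw [pd_const_mul (g := fun y => g y * g y) c (hg.mul hg), pd_mul hg hg]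
  ring

theorem Filter.EventuallyEq.pd_eq (hgh : g =ᶠ[𝓝 x] h) (i : Fin 3) : pd i g x = pd i h x := by
  simp only [pd, hgh.fderiv_eq]

theorem ContDiffAt.differentiableAt_pd (hg : ContDiffAt ℝ 2 g x) (i : Fin 3) :
    DifferentiableAt ℝ (pd i g) x :=
  ((hg.fderiv_right (m := 1) (by norm_num)).differentiableAt one_ne_zero).clm_apply
    (differentiableAt_const _)

end PartialDerivative

section VacuumBranch

variable {f h₃ h₄ : (Fin 3 → ℝ) → ℝ} {h₀ : ℝ} {x : Fin 3 → ℝ}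

theorem pd_h₄ (hd4 : ∀ y, h₄ y = -(f y) ^ 2) (hf : DifferentiableAt ℝ f x) (i : Fin 3) :
    pd i h₄ x = -2 * f x * pd i f x := by
  have h₄_eq : h₄ = fun y => -1 * f y ^ 2 := funext fun y => by rw [hd4]; ring
  rw [h₄_eq, pd_const_mul_sq _ hf]
  ring

theorem pd_h₃ (hd3 : ∀ y, h₃ y = h₀ ^ 2 * (pd 2 f y) ^ 2) (hf : DifferentiableAt ℝ (pd 2 f) x)
    (i : Fin 3) : pd i h₃ x = 2 * h₀ ^ 2 * pd 2 f x * pd i (pd 2 f) x := by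
  rw [funext hd3, pd_const_mul_sq _ hf]

theorem pd_pd_h₄ (hd4 : ∀ y, h₄ y = -(f y) ^ 2) (hf : ContDiffAt ℝ 2 f x) (i : Fin 3) :
    pd i (pd 2 h₄) x = -2 * (pd i f x * pd 2 f x + f x * pd i (pd 2 f) x) := by
  have hf' : DifferentiableAt ℝ f x := hf.differentiableAt (by norm_num)
  have pd_h₄_near : pd 2 h₄ =ᶠ[𝓝 x] fun y => -2 * (f y * pd 2 f y) :=
    (hf.eventually (by simp)).mono fun y hy =>
      (pd_h₄ hd4 (hy.differentiableAt (by norm_num)) 2).trans (by ring)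
  rw [pd_h₄_near.pd_eq,
    pd_const_mul (g := fun y => f y * pd 2 f y) _ (hf'.mul (hf.differentiableAt_pd 2)),
    pd_mul hf' (hf.differentiableAt_pd 2)]
  ring

theorem sq_pd_h₄_eq (hd4 : ∀ y, h₄ y = -(f y) ^ 2) (hd3 : ∀ y, h₃ y = h₀ ^ 2 * (pd 2 f y) ^ 2)
    (hh₀ : h₀ ≠ 0) (hf : DifferentiableAt ℝ f x) :
    (pd 2 h₄ x) ^ 2 = 4 / h₀ ^ 2 * h₃ x * |h₄ x| := by
  rw [pd_h₄ hd4 hf, hd3, hd4, abs_neg, abs_of_nonneg (sq_nonneg _)]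
  field_simp
  ring

theorem sq_pd_h₄_div_abs_eq (hd4 : ∀ y, h₄ y = -(f y) ^ 2)
    (hd3 : ∀ y, h₃ y = h₀ ^ 2 * (pd 2 f y) ^ 2) (hh₀ : h₀ ≠ 0) (hf : DifferentiableAt ℝ f x)
    (hfx : f x ≠ 0) (hfs : pd 2 f x ≠ 0) :
    (pd 2 h₄ x) ^ 2 / |h₃ x * h₄ x| = 4 / h₀ ^ 2 := by
  have h₃_pos : 0 < h₃ x := by rw [hd3]; positivity
  have h₄_ne : |h₄ x| ≠ 0 := by rw [hd4]; simpa using hfx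
  rw [abs_mul, abs_of_pos h₃_pos, sq_pd_h₄_eq hd4 hd3 hh₀ hf]
  field_simp

theorem vertical_vacuum_eq (hd4 : ∀ y, h₄ y = -(f y) ^ 2) (hd3 : ∀ y, h₃ y = h₀ ^ 2 * (pd 2 f y) ^ 2)
    (hh₀ : h₀ ≠ 0) (hf : ContDiffAt ℝ 2 f x) (hfx : f x ≠ 0) (hfs : pd 2 f x ≠ 0) :
    pd 2 (pd 2 h₄) x - (pd 2 h₄ x) ^ 2 / (2 * h₄ x) -
      pd 2 h₃ x * pd 2 h₄ x / (2 * h₃ x) = 0 := by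
  rw [pd_pd_h₄ hd4 hf, pd_h₄ hd4 (hf.differentiableAt (by norm_num)),
    pd_h₃ hd3 (hf.differentiableAt_pd 2), hd3, hd4]
  field_simp
  ring

theorem mixed_vacuum_eq (hd4 : ∀ y, h₄ y = -(f y) ^ 2) (hd3 : ∀ y, h₃ y = h₀ ^ 2 * (pd 2 f y) ^ 2)
    (hh₀ : h₀ ≠ 0) (hf : ContDiffAt ℝ 2 f x) (hfx : f x ≠ 0) (hfs : pd 2 f x ≠ 0) (i : Fin 3) :
    pd 2 h₄ x / (4 * h₄ x) * (pd i h₃ x / h₃ x + pd i h₄ x / h₄ x) -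
      pd i (pd 2 h₄) x / (2 * h₄ x) = 0 := by
  have hf' : DifferentiableAt ℝ f x := hf.differentiableAt (by norm_num)
  rw [pd_pd_h₄ hd4 hf, pd_h₄ hd4 hf', pd_h₄ hd4 hf', pd_h₃ hd3 (hf.differentiableAt_pd 2), hd3,
    hd4]
  field_simp
  ring

end VacuumBranch

/-- Second effective vacuum branch: `h₄ = −f²`, `h₃ = h₀²(f*)²` with `f* ≠ 0` give a
constant generating function `(h₄*)²/|h₃h₄| = 4/h₀²` and solve the vertical vacuum
Einstein equations with arbitrary `w_k`. -/
theorem vacuum_branch_generated_by_f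
    (U : Set (Fin 3 → ℝ)) (hU : IsOpen U)
    (f : (Fin 3 → ℝ) → ℝ) (hf : ContDiffOn ℝ 2 f U)
    (hfne : ∀ x ∈ U, f x ≠ 0) (hfs : ∀ x ∈ U, pd 2 f x ≠ 0)
    (h₀ : ℝ) (hh₀ : h₀ ≠ 0)
    (h₃ h₄ : (Fin 3 → ℝ) → ℝ)
    (hd4 : ∀ x, h₄ x = -(f x) ^ 2)
    (hd3 : ∀ x, h₃ x = h₀ ^ 2 * (pd 2 f x) ^ 2) :
    (∀ x ∈ U, (pd 2 h₄ x) ^ 2 = 4 / h₀ ^ 2 * h₃ x * |h₄ x|) ∧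
    (∀ x ∈ U, (pd 2 h₄ x) ^ 2 / |h₃ x * h₄ x| = 4 / h₀ ^ 2) ∧
    (∀ x ∈ U,
      pd 2 (pd 2 h₄) x - (pd 2 h₄ x) ^ 2 / (2 * h₄ x) -
        pd 2 h₃ x * pd 2 h₄ x / (2 * h₃ x) = 0) ∧
    (∀ x ∈ U, ∀ k : Fin 2,
      pd 2 h₄ x / (4 * h₄ x) * (pd (ix k) h₃ x / h₃ x + pd (ix k) h₄ x / h₄ x) -
        pd (ix k) (pd 2 h₄) x / (2 * h₄ x) = 0) ∧
    (∀ w : Fin 2 → (Fin 3 → ℝ) → ℝ, ∀ x ∈ U, ∀ k : Fin 2,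
      w k x / (2 * h₄ x) *
          (pd 2 (pd 2 h₄) x - (pd 2 h₄ x) ^ 2 / (2 * h₄ x) -
            pd 2 h₃ x * pd 2 h₄ x / (2 * h₃ x)) +
        pd 2 h₄ x / (4 * h₄ x) * (pd (ix k) h₃ x / h₃ x + pd (ix k) h₄ x / h₄ x) -
        pd (ix k) (pd 2 h₄) x / (2 * h₄ x) = 0) := by
  have hfx : ∀ x ∈ U, ContDiffAt ℝ 2 f x := fun x hx => hf.contDiffAt (hU.mem_nhds hx)
  have vertical : ∀ x ∈ U, _ := fun x hx =>
    vertical_vacuum_eq hd4 hd3 hh₀ (hfx x hx) (hfne x hx) (hfs x hx)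
  have mixed : ∀ x ∈ U, ∀ k : Fin 2, _ := fun x hx k =>
    mixed_vacuum_eq hd4 hd3 hh₀ (hfx x hx) (hfne x hx) (hfs x hx) (ix k)
  refine ⟨fun x hx => sq_pd_h₄_eq hd4 hd3 hh₀ ((hfx x hx).differentiableAt (by norm_num)),
    fun x hx => sq_pd_h₄_div_abs_eq hd4 hd3 hh₀ ((hfx x hx).differentiableAt (by norm_num))
      (hfne x hx) (hfs x hx), vertical, mixed, fun w x hx k => ?_⟩
  rw [vertical x hx, mul_zero, zero_add]
  exact mixed x hx k
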